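/- Let E be a deflation-exact category and let f : X → Y be a morphism admitting a cokernel. The morphism (f, 0)ᵀ : X → Y ⊕ Y' is an inflation if and only if f is an inflation. If E is moreover weakly idempotent complete, the same equivalence holds without assuming that f has a cokernel. -/
import Mathlib


open CategoryTheory CategoryTheory.Limits ZeroObject

attribute [local instance] CategoryTheory.Limits.hasBinaryBiproducts_of_finite_biproducts

universe v u

section Preamble

variable {C : Type u} [Category.{v} C] [Preadditive C] [HasZeroObject C]
  [HasFiniteBiproducts C]

/-- `(f, g)` is a kernel-cokernel pair: `f` is a kernel of `g` and `g` is a cokernel of `f`. -/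
structure IsKernelCokernelPair {X Y Z : C} (f : X ⟶ Y) (g : Y ⟶ Z) : Prop where
  comp_zero : f ≫ g = 0
  isKernel : Nonempty (IsLimit (KernelFork.ofι f comp_zero))
  isCokernel : Nonempty (IsColimit (CokernelCofork.ofπ g comp_zero))

/-- `k` is a kernel of `g`. -/
def IsKernelOf {K Y Z : C} (k : K ⟶ Y) (g : Y ⟶ Z) : Prop :=
  ∃ w : k ≫ g = 0, Nonempty (IsLimit (KernelFork.ofι k w))

/-- `c` is a cokernel of `f`. -/
def IsCokernelOf {X Y Q : C} (c : Y ⟶ Q) (f : X ⟶ Y) : Prop :=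
  ∃ w : f ≫ c = 0, Nonempty (IsColimit (CokernelCofork.ofπ c w))

/-- All pullbacks along `g` exist. -/
def HasAllPullbacksAlong {Y Z : C} (g : Y ⟶ Z) : Prop :=
  ∀ ⦃W : C⦄ (h : W ⟶ Z), ∃ (P : C) (p₁ : P ⟶ Y) (p₂ : P ⟶ W), IsPullback p₁ p₂ g h

/-- An additive category is weakly idempotent complete if every retraction has a kernel. -/
def WeaklyIdempotentComplete (C : Type u) [Category.{v} C] [Preadditive C]
    [HasZeroObject C] [HasFiniteBiproducts C] : Prop :=
  ∀ ⦃X Y : C⦄ (r : X ⟶ Y), (∃ s : Y ⟶ X, s ≫ r = 𝟙 Y) → HasKernel r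

end Preamble

/-- A conflation structure on an additive category: a class of kernel-cokernel pairs
closed under isomorphisms.  The first morphism of a conflation is called an inflation,
the second a deflation. -/
structure ConflationStruct (C : Type u) [Category.{v} C] [Preadditive C]
    [HasZeroObject C] [HasFiniteBiproducts C] where
  IsConflation : ∀ ⦃X Y Z : C⦄, (X ⟶ Y) → (Y ⟶ Z) → Prop
  kernelCokernel : ∀ ⦃X Y Z : C⦄ ⦃f : X ⟶ Y⦄ ⦃g : Y ⟶ Z⦄,
    IsConflation f g → IsKernelCokernelPair f g
  iso_closed : ∀ ⦃X Y Z X' Y' Z' : C⦄ ⦃f : X ⟶ Y⦄ ⦃g : Y ⟶ Z⦄ ⦃f' : X' ⟶ Y'⦄ ⦃g' : Y' ⟶ Z'⦄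
    (eX : X ≅ X') (eY : Y ≅ Y') (eZ : Z ≅ Z'),
    f ≫ eY.hom = eX.hom ≫ f' → g ≫ eZ.hom = eY.hom ≫ g' →
    IsConflation f g → IsConflation f' g'

namespace ConflationStruct

variable {C : Type u} [Category.{v} C] [Preadditive C] [HasZeroObject C]
  [HasFiniteBiproducts C] (S : ConflationStruct C)

/-- A morphism is an inflation if it is the first morphism of some conflation. -/
def IsInflation {X Y : C} (f : X ⟶ Y) : Prop := ∃ (Z : C) (g : Y ⟶ Z), S.IsConflation f g

/-- A morphism is a deflation if it is the second morphism of some conflation. -/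
def IsDeflation {Y Z : C} (g : Y ⟶ Z) : Prop := ∃ (X : C) (f : X ⟶ Y), S.IsConflation f g

/-- A deflation-exact category: axioms (R0), (R1), (R2). -/
structure IsDeflationExact : Prop where
  R0 : S.IsDeflation (𝟙 (0 : C))
  R1 : ∀ ⦃X Y Z : C⦄ ⦃g : X ⟶ Y⦄ ⦃h : Y ⟶ Z⦄,
    S.IsDeflation g → S.IsDeflation h → S.IsDeflation (g ≫ h)
  R2 : ∀ ⦃Y Z : C⦄ ⦃g : Y ⟶ Z⦄, S.IsDeflation g → ∀ ⦃W : C⦄ (h : W ⟶ Z),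
    ∃ (P : C) (p₁ : P ⟶ Y) (p₂ : P ⟶ W), IsPullback p₁ p₂ g h ∧ S.IsDeflation p₂

/-- An inflation-exact category: axioms (L0), (L1), (L2). -/
structure IsInflationExact : Prop where
  L0 : S.IsInflation (𝟙 (0 : C))
  L1 : ∀ ⦃X Y Z : C⦄ ⦃f : X ⟶ Y⦄ ⦃g : Y ⟶ Z⦄,
    S.IsInflation f → S.IsInflation g → S.IsInflation (f ≫ g)
  L2 : ∀ ⦃X Y : C⦄ ⦃f : X ⟶ Y⦄, S.IsInflation f → ∀ ⦃W : C⦄ (h : X ⟶ W),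
    ∃ (Q : C) (q₁ : Y ⟶ Q) (q₂ : W ⟶ Q), IsPushout f h q₁ q₂ ∧ S.IsInflation q₂

/-- Axiom (R0*): for every object `A`, the morphism `A ⟶ 0` is a deflation. -/
def AxiomR0star : Prop := ∀ A : C, S.IsDeflation (0 : A ⟶ (0 : C))

/-- Axiom (R3), the obscure axiom: if `p` has a kernel and `i ≫ p` is a deflation,
then `p` is a deflation. -/
def AxiomR3 : Prop := ∀ ⦃A B Q : C⦄ (i : A ⟶ B) (p : B ⟶ Q),
  HasKernel p → S.IsDeflation (i ≫ p) → S.IsDeflation p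

/-- Axiom (R3−): if `f ≫ g` is a deflation and all pullbacks along `g` exist,
then `g` is a deflation. -/
def AxiomR3minus : Prop := ∀ ⦃X Y Z : C⦄ (f : X ⟶ Y) (g : Y ⟶ Z),
  S.IsDeflation (f ≫ g) → HasAllPullbacksAlong g → S.IsDeflation g

/-- Axiom (R3+): if `f ≫ g` is a deflation, then `g` is a deflation. -/
def AxiomR3plus : Prop := ∀ ⦃X Y Z : C⦄ (f : X ⟶ Y) (g : Y ⟶ Z),
  S.IsDeflation (f ≫ g) → S.IsDeflation g

/-- A morphism is admissible if it factors as a deflation followed by an inflation. -/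
def IsAdmissible {X Y : C} (f : X ⟶ Y) : Prop :=
  ∃ (I : C) (e : X ⟶ I) (m : I ⟶ Y), S.IsDeflation e ∧ S.IsInflation m ∧ e ≫ m = f

/-- Exactness of a pair of composable admissible morphisms at the middle object:
the inflation (image) part of `f` is a kernel of `g`, and the deflation (coimage)
part of `g` is a cokernel of `f`. -/
def ExactAt {X Y Z : C} (f : X ⟶ Y) (g : Y ⟶ Z) : Prop :=
  (∃ (I : C) (e : X ⟶ I) (m : I ⟶ Y),
    S.IsDeflation e ∧ S.IsInflation m ∧ e ≫ m = f ∧ IsKernelOf m g) ∧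
  (∃ (J : C) (e' : Y ⟶ J) (m' : J ⟶ Z),
    S.IsDeflation e' ∧ S.IsInflation m' ∧ e' ≫ m' = g ∧ IsCokernelOf e' f)

/-- A `P`-deflation: (P1) all pullbacks along `f` exist, and (P2) there is a morphism
`h` such that `h ≫ f` is a deflation. -/
def IsPDeflation {X Y : C} (f : X ⟶ Y) : Prop :=
  HasAllPullbacksAlong f ∧ ∃ (W : C) (h : W ⟶ X), S.IsDeflation (h ≫ f)

end ConflationStruct


section ObscureAux

variable {C : Type u} [Category.{v} C] [Preadditive C] [HasZeroObject C]
  [HasFiniteBiproducts C] (S : ConflationStruct C)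

/-- Deflations are closed under isomorphisms of arrows. -/
lemma defl_iso {Y Z Y₁ Z₁ : C} {g : Y ⟶ Z} {g₁ : Y₁ ⟶ Z₁} (eY : Y ≅ Y₁) (eZ : Z ≅ Z₁)
    (hcomm : g ≫ eZ.hom = eY.hom ≫ g₁) (hg : S.IsDeflation g) : S.IsDeflation g₁ := by
  obtain ⟨X, f, hc⟩ := hg
  exact ⟨X, f ≫ eY.hom, S.iso_closed (Iso.refl X) eY eZ (by simp) hcomm hc⟩

/-- Any given pullback of a deflation (along any morphism) is a deflation. -/
lemma defl_pullback (hDE : S.IsDeflationExact) {P Y Z W : C} {p₁ : P ⟶ Y} {p₂ : P ⟶ W}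
    {g : Y ⟶ Z} {h : W ⟶ Z} (hg : S.IsDeflation g) (hpb : IsPullback p₁ p₂ g h) :
    S.IsDeflation p₂ := by
  obtain ⟨P', q₁, q₂, hpb', hq⟩ := hDE.R2 hg h
  refine defl_iso S (hpb'.isoIsPullback _ _ hpb) (Iso.refl W) ?_ hq
  simp [IsPullback.isoIsPullback_hom_snd]

lemma defl_id (hDE : S.IsDeflationExact) (A : C) : S.IsDeflation (𝟙 A) :=
  defl_pullback S hDE hDE.R0 (IsPullback.of_id_snd (f := (0 : A ⟶ (0 : C))))

/-- `biprod.map g (𝟙 Y')` is a pullback of `g` along `biprod.fst`. -/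
lemma isPullback_map {Y Z : C} (Y' : C) (g : Y ⟶ Z) :
    IsPullback biprod.fst (biprod.map g (𝟙 Y')) g biprod.fst := by
  refine IsPullback.of_isLimit (c := PullbackCone.mk _ _ (by simp :
    (biprod.fst : Y ⊞ Y' ⟶ Y) ≫ g = biprod.map g (𝟙 Y') ≫ biprod.fst)) ?_
  refine PullbackCone.IsLimit.mk (by simp) (fun s => biprod.lift s.fst (s.snd ≫ biprod.snd))
    (fun s => by simp) (fun s => ?_) (fun s m h₁ h₂ => ?_)
  · apply biprod.hom_ext
    · simp only [Category.assoc, biprod.map_fst, biprod.lift_fst_assoc]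
      exact s.condition
    · simp
  · apply biprod.hom_ext
    · simpa using h₁
    · have : m ≫ biprod.map g (𝟙 Y') ≫ biprod.snd = s.snd ≫ biprod.snd := by
        rw [← Category.assoc, h₂]
      simpa using this

lemma defl_map (hDE : S.IsDeflationExact) {Y Z : C} (Y' : C) {g : Y ⟶ Z}
    (hg : S.IsDeflation g) : S.IsDeflation (biprod.map g (𝟙 Y')) :=
  defl_pullback S hDE hg (isPullback_map Y' g)

/-- `c` is a pullback of `biprod.map c (𝟙 Y')` along `biprod.inl`. -/
lemma isPullback_unmap {Y Q : C} (Y' : C) (c : Y ⟶ Q) :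
    IsPullback biprod.inl c (biprod.map c (𝟙 Y')) biprod.inl := by
  refine IsPullback.of_isLimit (c := PullbackCone.mk _ _ (by simp :
    (biprod.inl : Y ⟶ Y ⊞ Y') ≫ biprod.map c (𝟙 Y') = c ≫ biprod.inl)) ?_
  refine PullbackCone.IsLimit.mk (by simp) (fun s => s.fst ≫ biprod.fst)
    (fun s => ?_) (fun s => ?_) (fun s m h₁ h₂ => ?_)
  · have hsnd : s.fst ≫ biprod.snd = 0 := by
      have := s.condition =≫ biprod.snd
      simpa using this
    apply biprod.hom_ext
    · simp
    · simpa using hsnd.symm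
  · have := s.condition =≫ biprod.fst
    simpa using this
  · show m = s.fst ≫ biprod.fst
    rw [← h₁]; simp

lemma defl_unmap (hDE : S.IsDeflationExact) {Y Q : C} (Y' : C) {c : Y ⟶ Q}
    (h : S.IsDeflation (biprod.map c (𝟙 Y'))) : S.IsDeflation c :=
  defl_pullback S hDE h (isPullback_unmap Y' c)

/-- If `(k, g)` is a conflation and `f` is also a kernel of `g`, then `(f, g)` is a
conflation. -/
lemma conf_of_kernel {K X Y Z : C} {k : K ⟶ Y} {g : Y ⟶ Z} {f : X ⟶ Y}
    (hc : S.IsConflation k g) (w : f ≫ g = 0) (hf : IsLimit (KernelFork.ofι f w)) :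
    S.IsConflation f g := by
  have pair := S.kernelCokernel hc
  obtain ⟨hk⟩ := pair.isKernel
  let e : X ≅ K := IsLimit.conePointUniqueUpToIso hf hk
  have he : e.hom ≫ k = f := by
    simpa using IsLimit.conePointUniqueUpToIso_hom_comp hf hk WalkingParallelPair.zero
  refine S.iso_closed e.symm (Iso.refl Y) (Iso.refl Z) ?_ (by simp) hc
  simp [← he]

/-- If `(f, q)` is a conflation and `c` is also a cokernel of `f`, then `(f, c)` is a
conflation. -/
lemma conf_of_cokernel {X Y Z Q : C} {f : X ⟶ Y} {q : Y ⟶ Z} {c : Y ⟶ Q}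
    (hc : S.IsConflation f q) (w : f ≫ c = 0) (hco : IsColimit (CokernelCofork.ofπ c w)) :
    S.IsConflation f c := by
  have pair := S.kernelCokernel hc
  obtain ⟨hq⟩ := pair.isCokernel
  let e : Z ≅ Q := IsColimit.coconePointUniqueUpToIso hq hco
  have he : q ≫ e.hom = c := by
    simpa using IsColimit.comp_coconePointUniqueUpToIso_hom hq hco WalkingParallelPair.one
  exact S.iso_closed (Iso.refl X) (Iso.refl Y) e (by simp) (by simp [he]) hc

/-- If `f` is a kernel of `g`, then `biprod.lift f 0` is a kernel of
`biprod.map g (𝟙 Y')`. -/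
noncomputable def isLimit_lift {X Y Z : C} (Y' : C) {f : X ⟶ Y} {g : Y ⟶ Z} (w : f ≫ g = 0)
    (hf : IsLimit (KernelFork.ofι f w))
    (w' : biprod.lift f (0 : X ⟶ Y') ≫ biprod.map g (𝟙 Y') = 0) :
    IsLimit (KernelFork.ofι (biprod.lift f (0 : X ⟶ Y')) w') := by
  refine KernelFork.IsLimit.ofι _ _ (fun {T} t ht => ?_) (fun {T} t ht => ?_)
    (fun {T} t ht m hm => ?_)
  · refine (KernelFork.IsLimit.lift' hf (t ≫ biprod.fst) ?_).1
    have := ht =≫ biprod.fst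
    simpa using this
  · have hsnd : t ≫ biprod.snd = 0 := by
      have := ht =≫ biprod.snd
      simpa using this
    apply biprod.hom_ext
    · simpa using (KernelFork.IsLimit.lift' hf (t ≫ biprod.fst) _).2
    · simpa using hsnd.symm
  · apply Fork.IsLimit.hom_ext hf
    have h1 : m ≫ f = t ≫ biprod.fst := by
      have := hm =≫ biprod.fst
      simpa using this
    simpa [h1] using (KernelFork.IsLimit.lift' hf (t ≫ biprod.fst) _).2.symm

/-- If `c` is a cokernel of `f`, then `biprod.map c (𝟙 Y')` is a cokernel of
`biprod.lift f 0`. -/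
noncomputable def isColimit_map {X Y Q : C} (Y' : C) {f : X ⟶ Y} {c : Y ⟶ Q} (w : f ≫ c = 0)
    (hc : IsColimit (CokernelCofork.ofπ c w))
    (w' : biprod.lift f (0 : X ⟶ Y') ≫ biprod.map c (𝟙 Y') = 0) :
    IsColimit (CokernelCofork.ofπ (biprod.map c (𝟙 Y')) w') := by
  have hepi : ∀ {T : C} (t : Y ⊞ Y' ⟶ T), biprod.lift f (0 : X ⟶ Y') ≫ t = 0 →
      f ≫ biprod.inl ≫ t = 0 := by
    intro T t ht
    have : biprod.lift f (0 : X ⟶ Y') = f ≫ biprod.inl := by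
      apply biprod.hom_ext <;> simp
    rw [← Category.assoc, ← this, ht]
  refine CokernelCofork.IsColimit.ofπ _ _ (fun {T} t ht =>
      biprod.desc (CokernelCofork.IsColimit.desc' hc (biprod.inl ≫ t) (hepi t ht)).1
        (biprod.inr ≫ t))
    (fun {T} t ht => ?_) (fun {T} t ht m hm => ?_)
  · apply biprod.hom_ext'
    · simpa using (CokernelCofork.IsColimit.desc' hc (biprod.inl ≫ t) (hepi t ht)).2
    · simp
  · apply biprod.hom_ext'
    · apply Cofork.IsColimit.hom_ext hc
      have h1 : biprod.inl ≫ biprod.map c (𝟙 Y') ≫ m = biprod.inl ≫ t := by rw [hm]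
      simp only [biprod.inl_map_assoc] at h1
      have h2 := (CokernelCofork.IsColimit.desc' hc (biprod.inl ≫ t) (hepi t ht)).2
      simpa [h1] using h2.symm
    · have h1 : biprod.inr ≫ biprod.map c (𝟙 Y') ≫ m = biprod.inr ≫ t := by rw [hm]
      simpa using h1

/-- If `biprod.lift f 0` is a kernel of `biprod.map c (𝟙 Y')`, then `f` is a kernel of
`c`. -/
noncomputable def isLimit_unlift {X Y Q : C} (Y' : C) {f : X ⟶ Y} {c : Y ⟶ Q}
    (w' : biprod.lift f (0 : X ⟶ Y') ≫ biprod.map c (𝟙 Y') = 0)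
    (hk : IsLimit (KernelFork.ofι (biprod.lift f (0 : X ⟶ Y')) w'))
    (w : f ≫ c = 0) : IsLimit (KernelFork.ofι f w) := by
  have key : ∀ {T : C} (t : T ⟶ Y), t ≫ c = 0 →
      biprod.lift t (0 : T ⟶ Y') ≫ biprod.map c (𝟙 Y') = 0 := by
    intro T t ht
    apply biprod.hom_ext <;> simp [ht]
  refine KernelFork.IsLimit.ofι _ _
    (fun {T} t ht => (KernelFork.IsLimit.lift' hk (biprod.lift t 0) (key t ht)).1)
    (fun {T} t ht => ?_) (fun {T} t ht m hm => ?_)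
  · have := (KernelFork.IsLimit.lift' hk (biprod.lift t 0) (key t ht)).2 =≫ biprod.fst
    simpa using this
  · apply Fork.IsLimit.hom_ext hk
    have h1 : m ≫ biprod.lift f (0 : X ⟶ Y') = biprod.lift t (0 : T ⟶ Y') := by
      apply biprod.hom_ext <;> simp [hm]
    simpa [h1] using (KernelFork.IsLimit.lift' hk (biprod.lift t 0) (key t ht)).2.symm

/-- If `biprod.map u (𝟙 Y')` is a cokernel of `biprod.lift f 0`, then `u` is a cokernel
of `f`. -/
noncomputable def isColimit_unmap {X Y K : C} (Y' : C) {f : X ⟶ Y} {u : Y ⟶ K}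
    (w' : biprod.lift f (0 : X ⟶ Y') ≫ biprod.map u (𝟙 Y') = 0)
    (hc : IsColimit (CokernelCofork.ofπ (biprod.map u (𝟙 Y')) w'))
    (w : f ≫ u = 0) : IsColimit (CokernelCofork.ofπ u w) := by
  have key : ∀ {T : C} (t : Y ⟶ T), f ≫ t = 0 →
      biprod.lift f (0 : X ⟶ Y') ≫ biprod.desc t (0 : Y' ⟶ T) = 0 := by
    intro T t ht
    simp [ht]
  refine CokernelCofork.IsColimit.ofπ _ _
    (fun {T} t ht =>
      biprod.inl ≫ (CokernelCofork.IsColimit.desc' hc (biprod.desc t 0) (key t ht)).1)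
    (fun {T} t ht => ?_) (fun {T} t ht m hm => ?_)
  · have := biprod.inl ≫= (CokernelCofork.IsColimit.desc' hc (biprod.desc t 0) (key t ht)).2
    simpa using this
  · have h1 : biprod.map u (𝟙 Y') ≫ biprod.desc m (0 : Y' ⟶ T) = biprod.desc t 0 := by
      apply biprod.hom_ext' <;> simp [hm]
    have h2 : biprod.desc m (0 : Y' ⟶ T) =
        (CokernelCofork.IsColimit.desc' hc (biprod.desc t 0) (key t ht)).1 := by
      apply Cofork.IsColimit.hom_ext hc
      simpa [h1] using (CokernelCofork.IsColimit.desc' hc (biprod.desc t 0) (key t ht)).2.symm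
    show m = biprod.inl ≫ (CokernelCofork.IsColimit.desc' hc (biprod.desc t 0) (key t ht)).1
    rw [← h2]; simp

/-- Backward direction: if `f` is an inflation then so is `biprod.lift f 0`. -/
lemma part_bw (hDE : S.IsDeflationExact) {X Y : C} (Y' : C) {f : X ⟶ Y}
    (hf : S.IsInflation f) : S.IsInflation (biprod.lift f (0 : X ⟶ Y')) := by
  obtain ⟨Z, g, hconf⟩ := hf
  have pair := S.kernelCokernel hconf
  have hdefl : S.IsDeflation (biprod.map g (𝟙 Y')) :=
    defl_map S hDE Y' ⟨X, f, hconf⟩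
  obtain ⟨K, k, hk⟩ := hdefl
  have w' : biprod.lift f (0 : X ⟶ Y') ≫ biprod.map g (𝟙 Y') = 0 := by
    apply biprod.hom_ext <;> simp [pair.comp_zero]
  exact ⟨_, _, conf_of_kernel S hk w' (isLimit_lift Y' pair.comp_zero pair.isKernel.some w')⟩

/-- Forward direction assuming a cokernel of `f`. -/
lemma part_fw (hDE : S.IsDeflationExact) {X Y Q : C} (Y' : C) {f : X ⟶ Y} {c : Y ⟶ Q}
    (hc : IsCokernelOf c f) (hinf : S.IsInflation (biprod.lift f (0 : X ⟶ Y'))) :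
    S.IsInflation f := by
  obtain ⟨w, ⟨hcolim⟩⟩ := hc
  obtain ⟨Z, q, hq⟩ := hinf
  have w' : biprod.lift f (0 : X ⟶ Y') ≫ biprod.map c (𝟙 Y') = 0 := by
    apply biprod.hom_ext <;> simp [w]
  have hconf : S.IsConflation (biprod.lift f (0 : X ⟶ Y')) (biprod.map c (𝟙 Y')) :=
    conf_of_cokernel S hq w' (isColimit_map Y' w hcolim w')
  have hcd : S.IsDeflation c := defl_unmap S hDE Y' ⟨_, _, hconf⟩
  obtain ⟨X₀, k, hkconf⟩ := hcd
  have pair := S.kernelCokernel hconf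
  exact ⟨Q, c, conf_of_kernel S hkconf w (isLimit_unlift Y' w' pair.isKernel.some w)⟩

/-- In the weakly idempotent complete case, if `biprod.lift f 0` is an inflation then
`f` admits a cokernel. -/
lemma wic_cok (hW : WeaklyIdempotentComplete C) {X Y : C} (Y' : C) {f : X ⟶ Y}
    (hinf : S.IsInflation (biprod.lift f (0 : X ⟶ Y'))) :
    ∃ (Q : C) (c : Y ⟶ Q), IsCokernelOf c f := by
  obtain ⟨Z, g, hconf⟩ := hinf
  have pair := S.kernelCokernel hconf
  obtain ⟨hcolim⟩ := pair.isCokernel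
  have hsnd : biprod.lift f (0 : X ⟶ Y') ≫ biprod.snd = 0 := by simp
  obtain ⟨r₀, hr₀⟩ := CokernelCofork.IsColimit.desc' hcolim biprod.snd hsnd
  let r : Z ⟶ Y' := r₀
  have hr : g ≫ r = biprod.snd := hr₀
  set s : Y' ⟶ Z := biprod.inr ≫ g with hs
  have hsec : s ≫ r = 𝟙 Y' := by rw [hs, Category.assoc, hr]; simp
  have : HasKernel r := hW r ⟨s, hsec⟩
  set k : kernel r ⟶ Z := kernel.ι r with hkdef
  have hk0 : k ≫ r = 0 := kernel.condition r
  have he : (𝟙 Z - r ≫ s) ≫ r = 0 := by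
    simp [Preadditive.sub_comp, Category.assoc, hsec]
  set π : Z ⟶ kernel r := kernel.lift r (𝟙 Z - r ≫ s) he with hπdef
  have hπk : π ≫ k = 𝟙 Z - r ≫ s := kernel.lift_ι r _ he
  have hkπ : k ≫ π = 𝟙 (kernel r) := by
    rw [← cancel_mono k]
    simp [Category.assoc, hπk, Preadditive.comp_sub, reassoc_of% hk0]
  have hsπ : s ≫ π = 0 := by
    rw [← cancel_mono k]
    simp [Category.assoc, hπk, Preadditive.comp_sub, reassoc_of% hsec]
  have hfour : biprod.lift π r ≫ biprod.desc k s = 𝟙 Z := by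
    rw [biprod.lift_desc, hπk]; abel
  let φ : Z ≅ kernel r ⊞ Y' :=
    { hom := biprod.lift π r
      inv := biprod.desc k s
      hom_inv_id := hfour
      inv_hom_id := by
        apply biprod.hom_ext' <;> apply biprod.hom_ext <;>
          simp [hkπ, hk0, hsπ, hsec] }
  set u : Y ⟶ kernel r := biprod.inl ≫ g ≫ π with hu
  have hsπ' : biprod.inr ≫ g ≫ π = 0 := by
    rw [← Category.assoc]; exact hsπ
  have hgφ : g ≫ φ.hom = biprod.map u (𝟙 Y') := by
    apply biprod.hom_ext' <;> apply biprod.hom_ext <;>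
      simp [φ, hu, hr, hsπ']
  have hconf2 : S.IsConflation (biprod.lift f (0 : X ⟶ Y')) (biprod.map u (𝟙 Y')) :=
    S.iso_closed (Iso.refl X) (Iso.refl (Y ⊞ Y')) φ (by simp) (by simpa using hgφ) hconf
  have pair2 := S.kernelCokernel hconf2
  have w : f ≫ u = 0 := by
    have := pair2.comp_zero =≫ biprod.fst
    simpa using this
  exact ⟨kernel r, u, w, ⟨isColimit_unmap Y' pair2.comp_zero pair2.isCokernel.some w⟩⟩

end ObscureAux

/-- Let `E` be a deflation-exact category and `f : X ⟶ Y` a morphism admitting a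
cokernel.  Then `(f, 0)ᵀ : X ⟶ Y ⊕ Y'` is an inflation if and only if `f` is an
inflation.  If `E` is weakly idempotent complete, the cokernel hypothesis can be
dropped. -/
theorem obscure_axiom_other_side {C : Type u} [Category.{v} C] [Preadditive C]
    [HasZeroObject C] [HasFiniteBiproducts C] (S : ConflationStruct C)
    (hDE : S.IsDeflationExact) :
    (∀ (X Y Y' : C) (f : X ⟶ Y), (∃ (Q : C) (c : Y ⟶ Q), IsCokernelOf c f) →
      (S.IsInflation (biprod.lift f (0 : X ⟶ Y')) ↔ S.IsInflation f)) ∧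
    (WeaklyIdempotentComplete C →
      ∀ (X Y Y' : C) (f : X ⟶ Y),
        S.IsInflation (biprod.lift f (0 : X ⟶ Y')) ↔ S.IsInflation f) := by
  constructor
  · intro X Y Y' f hc
    obtain ⟨Q, c, hc⟩ := hc
    exact ⟨part_fw S hDE Y' hc, part_bw S hDE Y'⟩
  · intro hW X Y Y' f
    constructor
    · intro h
      obtain ⟨Q, c, hc⟩ := wic_cok S hW Y' h
      exact part_fw S hDE Y' hc h
    · exact part_bw S hDE Y'
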